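/- Extrema of the four-state clock model fixed points at criticality (equations (107)–(108)): for t > 0 define h₀(t) = (e^{t}+1)²/(4(1+sinh t)²), h₁(t) = sinh(t)/(2(1+sinh t)²), and h₂(t) = (e^{−t}−1)²/(4(1+sinh t)²), and let t_c = ln(1+√2). Then for every t > 0: h₀(t) ≥ (3+2√2)/8, h₁(t) ≤ 1/8, and h₂(t) ≤ (3−2√2)/8, with equality at t = t_c: h₀(t_c) = (3+2√2)/8, h₁(t_c) = 1/8, h₂(t_c) = (3−2√2)/8. -/

import Mathlib

/-!
Writing `s = sinh t` and `u = cosh t / (1 + s)`, the identities `e^{±t} = cosh t ± sinh t` and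
`cosh² = 1 + s²` give `h₀ = ((1 + u)/2)²`, `h₁ = (1 - u²)/4`, `h₂ = ((1 - u)/2)²`.
For `t ≥ 0` one has `1/2 ≤ u² ≤ 1`: the upper bound is `s ≥ 0`, the lower bound is
`2(1 + s²) - (1 + s)² = (1 - s)² ≥ 0`, with equality exactly when `s = 1`, i.e. at
`t_c = arsinh 1 = ln(1 + √2)`. All three extremal statements are then monotonicity in `u`.
-/

/-- The clock-model fixed point `π*(0) = (e^t+1)²/(4(1+sinh t)²)`. -/
noncomputable def clockH0 (t : ℝ) : ℝ :=
  (Real.exp t + 1) ^ 2 / (4 * (1 + Real.sinh t) ^ 2)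

/-- The clock-model fixed point `π*(1) = π*(3) = sinh(t)/(2(1+sinh t)²)`. -/
noncomputable def clockH1 (t : ℝ) : ℝ :=
  Real.sinh t / (2 * (1 + Real.sinh t) ^ 2)

/-- The clock-model fixed point `π*(2) = (e^{−t}−1)²/(4(1+sinh t)²)`. -/
noncomputable def clockH2 (t : ℝ) : ℝ :=
  (Real.exp (-t) - 1) ^ 2 / (4 * (1 + Real.sinh t) ^ 2)

open Real

noncomputable def clockRatio (t : ℝ) : ℝ :=
  cosh t / (1 + sinh t)

section

variable {t : ℝ}

lemma clockH0_eq (ht : 1 + sinh t ≠ 0) : clockH0 t = ((1 + clockRatio t) / 2) ^ 2 := by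
  rw [clockH0, clockRatio, ← cosh_add_sinh]
  field_simp
  ring

lemma clockH1_eq (ht : 1 + sinh t ≠ 0) : clockH1 t = (1 - clockRatio t ^ 2) / 4 := by
  rw [clockH1, clockRatio, div_pow, cosh_sq]
  field_simp
  ring

lemma clockH2_eq (ht : 1 + sinh t ≠ 0) : clockH2 t = ((1 - clockRatio t) / 2) ^ 2 := by
  rw [clockH2, clockRatio, ← cosh_sub_sinh]
  field_simp
  ring

lemma sqrt_two_div_two_le_clockRatio (ht : 0 < 1 + sinh t) : √2 / 2 ≤ clockRatio t := by
  rw [clockRatio, le_div_iff₀ ht,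
    ← pow_le_pow_iff_left₀ (by positivity) (cosh_pos t).le two_ne_zero, mul_pow, div_pow,
    sq_sqrt zero_le_two, cosh_sq]
  nlinarith [sq_nonneg (1 - sinh t)]

lemma clockRatio_le_one (ht : 0 ≤ t) : clockRatio t ≤ 1 := by
  have hs : 0 ≤ sinh t := sinh_nonneg_iff.mpr ht
  rw [clockRatio, div_le_one (by linarith),
    ← pow_le_pow_iff_left₀ (cosh_pos t).le (by linarith) two_ne_zero, cosh_sq]
  nlinarith

lemma log_one_add_sqrt_two_eq_arsinh_one : log (1 + √2) = arsinh 1 := by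
  norm_num [arsinh]

lemma clockRatio_arsinh_one : clockRatio (arsinh 1) = √2 / 2 := by
  rw [clockRatio, sinh_arsinh, cosh_arsinh]
  norm_num

lemma one_add_sinh_arsinh_one_ne_zero : 1 + sinh (arsinh 1) ≠ 0 := by
  norm_num [sinh_arsinh]

lemma clockH0_arsinh_one : clockH0 (arsinh 1) = (3 + 2 * √2) / 8 := by
  rw [clockH0_eq one_add_sinh_arsinh_one_ne_zero, clockRatio_arsinh_one]
  linear_combination (1 / 16 : ℝ) * sq_sqrt (zero_le_two : (0 : ℝ) ≤ 2)

lemma clockH1_arsinh_one : clockH1 (arsinh 1) = 1 / 8 := by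
  rw [clockH1_eq one_add_sinh_arsinh_one_ne_zero, clockRatio_arsinh_one, div_pow,
    sq_sqrt zero_le_two]
  norm_num

lemma clockH2_arsinh_one : clockH2 (arsinh 1) = (3 - 2 * √2) / 8 := by
  rw [clockH2_eq one_add_sinh_arsinh_one_ne_zero, clockRatio_arsinh_one]
  linear_combination (1 / 16 : ℝ) * sq_sqrt (zero_le_two : (0 : ℝ) ≤ 2)

lemma clockH0_arsinh_one_le (ht : 0 < 1 + sinh t) : clockH0 (arsinh 1) ≤ clockH0 t := by
  rw [clockH0_eq one_add_sinh_arsinh_one_ne_zero, clockH0_eq ht.ne', clockRatio_arsinh_one]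
  gcongr
  exact sqrt_two_div_two_le_clockRatio ht

lemma clockH1_le_clockH1_arsinh_one (ht : 0 < 1 + sinh t) : clockH1 t ≤ clockH1 (arsinh 1) := by
  rw [clockH1_eq one_add_sinh_arsinh_one_ne_zero, clockH1_eq ht.ne', clockRatio_arsinh_one]
  gcongr
  exact sqrt_two_div_two_le_clockRatio ht

lemma clockH2_le_clockH2_arsinh_one (ht : 0 ≤ t) : clockH2 t ≤ clockH2 (arsinh 1) := by
  have hs : 0 < 1 + sinh t := by linarith [sinh_nonneg_iff.mpr ht]
  rw [clockH2_eq one_add_sinh_arsinh_one_ne_zero, clockH2_eq hs.ne', clockRatio_arsinh_one]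
  gcongr
  · linarith [clockRatio_le_one ht]
  · exact sqrt_two_div_two_le_clockRatio hs

end

/-- Extrema of the four-state clock model fixed points at the critical coupling
`t_c = ln(1+√2)`: on `t > 0`, `h₀(t) ≥ (3+2√2)/8`, `h₁(t) ≤ 1/8`, `h₂(t) ≤ (3−2√2)/8`,
with equality at `t_c`. -/
theorem clock_fixed_point_extrema :
    (∀ t : ℝ, 0 < t →
      (3 + 2 * Real.sqrt 2) / 8 ≤ clockH0 t ∧
        clockH1 t ≤ 1 / 8 ∧ clockH2 t ≤ (3 - 2 * Real.sqrt 2) / 8) ∧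
    clockH0 (Real.log (1 + Real.sqrt 2)) = (3 + 2 * Real.sqrt 2) / 8 ∧
    clockH1 (Real.log (1 + Real.sqrt 2)) = 1 / 8 ∧
    clockH2 (Real.log (1 + Real.sqrt 2)) = (3 - 2 * Real.sqrt 2) / 8 := by
  rw [log_one_add_sqrt_two_eq_arsinh_one, ← clockH0_arsinh_one, ← clockH1_arsinh_one,
    ← clockH2_arsinh_one]
  refine ⟨fun t ht => ?_, rfl, rfl, rfl⟩
  have hs : 0 < 1 + sinh t := by linarith [sinh_pos_iff.mpr ht]
  exact ⟨clockH0_arsinh_one_le hs, clockH1_le_clockH1_arsinh_one hs,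
    clockH2_le_clockH2_arsinh_one ht.le⟩
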